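/- Hyperstability of the m-dimensional quadratic equation in Banach spaces: Let X be a vector space over K, E ⊆ X nonempty, symmetric about 0, closed under +, −, and scalar multiplication, Y a Banach space, and m ≥ 2. Let φ: E^m → [0,∞) satisfy lim_{n→∞} φ(x, nx, …, nx) = 0 and lim_{n→∞} φ(nx₁, …, nx_m) = 0. If f: E → Y satisfies ‖ f(∑_{i=1}^m x_i) + ∑_{1≤i<j≤m} f(x_i − x_j) − m∑_{i=1}^m f(x_i) ‖ ≤ φ(x₁,…,x_m) for all x₁,…,x_m ∈ E, then f(∑ x_i) + ∑_{i<j} f(x_i − x_j) = m∑ f(x_i) for all x₁,…,x_m ∈ E. -/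

import Mathlib

/-!
Hyers' direct method. The instance `x = (z, …, z)` of the inequality reads
`‖f (m • z) - m² • f z‖ ≤ φ (z, …, z)`, so `m⁻²ʲ • f (mʲ • z)` is a geometric Cauchy sequence; its
limit `Q` solves the equation exactly, because rescaling the inequality by `mʲ` divides the defect
by `m²ʲ`, and `f - Q` tends to `0` along every ray `k • z`. At `(x, n • x, …, n • x)` the defect
of `f - Q` then tends to `-m • (f x - Q x)` as `n → ∞`, while it equals the defect of `f`, which
the first condition on `φ` sends to `0`. Hence `f = Q` on `E`.
-/

open Filter Topology Finset

section Defect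

variable {G H Y : Type*} [AddCommGroup G] [AddCommGroup H] [AddCommGroup Y] {m : ℕ}

def quadraticDefect (f : G → Y) (x : Fin m → G) : Y :=
  f (∑ i, x i) + ∑ q ∈ univ.filter (fun q : Fin m × Fin m => q.1 < q.2), f (x q.1 - x q.2)
    - m • ∑ i, f (x i)

theorem quadraticDefect_comp (f : H → Y) (g : G →+ H) (x : Fin m → G) :
    quadraticDefect (f ∘ g) x = quadraticDefect f (g ∘ x) := by
  simp [quadraticDefect, map_sum, map_sub]

theorem quadraticDefect_sub (f g : G → Y) (x : Fin m → G) :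
    quadraticDefect (f - g) x = quadraticDefect f x - quadraticDefect g x := by
  simp only [quadraticDefect, Pi.sub_apply, sum_sub_distrib, smul_sub]
  abel

theorem quadraticDefect_smul {R : Type*} [Monoid R] [DistribMulAction R Y] (a : R) (f : G → Y)
    (x : Fin m → G) : quadraticDefect (a • f) x = a • quadraticDefect f x := by
  simp only [quadraticDefect, Pi.smul_apply, smul_add, smul_sub, smul_sum, smul_comm a m]

theorem quadraticDefect_const {f : G → Y} (hf : f 0 = 0) (z : G) :
    quadraticDefect f (fun _ : Fin m => z) = f (m • z) - (m * m) • f z := by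
  simp [quadraticDefect, hf, mul_smul]

theorem apply_zero_eq_zero_of_quadraticDefect [IsAddTorsionFree Y] (hm : 2 ≤ m) {f : G → Y}
    (hf : quadraticDefect f (0 : Fin m → G) = 0) : f 0 = 0 := by
  set S := univ.filter (fun q : Fin m × Fin m => q.1 < q.2)
  -- the defect at `0` is `(1 + #S - m * m) • f 0`, and `S` misses the diagonal
  have hS : #S ≤ m * m - m := by
    have : S ⊆ (univ : Finset (Fin m)).offDiag := fun q hq => by
      simpa using (mem_filter.1 hq).2.ne
    simpa using card_le_card this
  obtain ⟨k, hk⟩ : ∃ k, m * m = 1 + #S + (k + 1) :=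
    ⟨m * m - #S - 2, by have := Nat.mul_le_mul_right m hm; omega⟩
  have h₀ : f 0 + #S • f 0 - (m * m) • f 0 = 0 := by simpa [quadraticDefect, S, smul_smul] using hf
  have : (k + 1) • f 0 = 0 := by
    rw [← neg_eq_zero, ← h₀, hk]
    simp only [add_nsmul, one_nsmul]
    abel
  exact (nsmul_eq_zero_iff_right k.succ_ne_zero).1 this

theorem tendsto_quadraticDefect {Y : Type*} [AddCommGroup Y] [TopologicalSpace Y]
    [IsTopologicalAddGroup Y] {ι : Type*} {l : Filter ι} {F : ι → G → Y} {f : G → Y}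
    (hF : ∀ z, Tendsto (fun j => F j z) l (𝓝 (f z))) (x : Fin m → G) :
    Tendsto (fun j => quadraticDefect (F j) x) l (𝓝 (quadraticDefect f x)) :=
  ((hF _).add (tendsto_finsetSum _ fun _ _ => hF _)).sub
    ((tendsto_finsetSum _ fun _ _ => hF _).nsmul m)

end Defect

section Hyers

variable {G Y : Type*} [AddCommGroup G] [NormedAddCommGroup Y] [NormedSpace ℝ Y]
  {f : G → Y} {a : ℕ} {c : ℝ} {ψ : G → ℝ} {z : G} {M : ℝ}

noncomputable def hyersSeq (f : G → Y) (a : ℕ) (c : ℝ) (j : ℕ) : G → Y :=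
  (c ^ j)⁻¹ • (f ∘ nsmulAddMonoidHom (a ^ j))

theorem hyersSeq_apply (j : ℕ) (z : G) : hyersSeq f a c j z = (c ^ j)⁻¹ • f (a ^ j • z) := rfl

theorem quadraticDefect_hyersSeq {m : ℕ} (j : ℕ) (x : Fin m → G) :
    quadraticDefect (hyersSeq f a c j) x = (c ^ j)⁻¹ • quadraticDefect f (a ^ j • x) := by
  rw [hyersSeq, quadraticDefect_smul, quadraticDefect_comp]
  rfl

theorem dist_hyersSeq_succ_le (hc : 0 < c) (hf : ∀ z, ‖f (a • z) - c • f z‖ ≤ ψ z)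
    (hM : ∀ j, ψ (a ^ j • z) ≤ M) (n : ℕ) :
    dist (hyersSeq f a c n z) (hyersSeq f a c (n + 1) z) ≤ M / c * c⁻¹ ^ n := by
  have hstep : hyersSeq f a c (n + 1) z - hyersSeq f a c n z
      = (c ^ (n + 1))⁻¹ • (f (a • a ^ n • z) - c • f (a ^ n • z)) := by
    have hcoef : (c ^ (n + 1))⁻¹ * c = (c ^ n)⁻¹ := by
      rw [pow_succ, mul_inv, mul_assoc, inv_mul_cancel₀ hc.ne', mul_one]
    rw [smul_sub, smul_smul _ c, hcoef, smul_smul a, ← pow_succ', hyersSeq_apply, hyersSeq_apply]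
  rw [dist_comm, dist_eq_norm, hstep, norm_smul, Real.norm_of_nonneg (by positivity)]
  calc (c ^ (n + 1))⁻¹ * ‖f (a • a ^ n • z) - c • f (a ^ n • z)‖ ≤ (c ^ (n + 1))⁻¹ * M :=
        mul_le_mul_of_nonneg_left ((hf _).trans (hM n)) (by positivity)
    _ = M / c * c⁻¹ ^ n := by rw [pow_succ, mul_inv, inv_pow]; ring

noncomputable def hyersLimit (f : G → Y) (a : ℕ) (c : ℝ) (z : G) : Y :=
  limUnder atTop fun j => hyersSeq f a c j z

variable [CompleteSpace Y]

theorem tendsto_hyersSeq (hc : 1 < c) (hf : ∀ z, ‖f (a • z) - c • f z‖ ≤ ψ z)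
    (hM : ∀ j, ψ (a ^ j • z) ≤ M) :
    Tendsto (fun j => hyersSeq f a c j z) atTop (𝓝 (hyersLimit f a c z)) :=
  (cauchySeq_of_le_geometric _ _ (inv_lt_one_of_one_lt₀ hc)
    (dist_hyersSeq_succ_le (by linarith) hf hM)).tendsto_limUnder

theorem dist_le_hyersLimit (hc : 1 < c) (hf : ∀ z, ‖f (a • z) - c • f z‖ ≤ ψ z)
    (hM : ∀ j, ψ (a ^ j • z) ≤ M) : dist (f z) (hyersLimit f a c z) ≤ M / (c - 1) := by
  have := dist_le_of_le_geometric_of_tendsto₀ _ _ (inv_lt_one_of_one_lt₀ hc)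
    (dist_hyersSeq_succ_le (by linarith) hf hM) (tendsto_hyersSeq hc hf hM)
  rwa [hyersSeq_apply, pow_zero, pow_zero, one_smul, inv_one, one_smul,
    show M / c / (1 - c⁻¹) = M / (c - 1) by field_simp] at this

theorem tendsto_sub_hyersLimit (ha : 0 < a) (hc : 1 < c) (hf : ∀ z, ‖f (a • z) - c • f z‖ ≤ ψ z)
    (hψ : Tendsto (fun k : ℕ => ψ (k • z)) atTop (𝓝 0)) :
    Tendsto (fun k : ℕ => f (k • z) - hyersLimit f a c (k • z)) atTop (𝓝 0) := by
  rw [Metric.tendsto_atTop]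
  intro ε hε
  have hc₁ : 0 < c - 1 := sub_pos.2 hc
  have hδ : 0 < ε * (c - 1) / 2 := by positivity
  obtain ⟨N, hN⟩ := eventually_atTop.1 (hψ.eventually (ge_mem_nhds hδ))
  refine ⟨N, fun k hk => ?_⟩
  have hM : ∀ j, ψ (a ^ j • k • z) ≤ ε * (c - 1) / 2 := fun j => by
    rw [smul_smul]
    exact hN _ (hk.trans (Nat.le_mul_of_pos_left k (by positivity)))
  rw [dist_zero_right, ← dist_eq_norm]
  calc _ ≤ ε * (c - 1) / 2 / (c - 1) := dist_le_hyersLimit hc hf hM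
    _ = ε / 2 := by field_simp
    _ < ε := half_lt_self hε

theorem quadraticDefect_hyersLimit_eq_zero {m : ℕ} {φ : (Fin m → G) → ℝ} (hc : 1 < c)
    (hf : ∀ z, ‖f (a • z) - c • f z‖ ≤ ψ z) (hψ : ∀ z, BddAbove (Set.range fun j => ψ (a ^ j • z)))
    (hφ : ∀ x, BddAbove (Set.range fun j => φ (a ^ j • x)))
    (hD : ∀ x, ‖quadraticDefect f x‖ ≤ φ x) (x : Fin m → G) :
    quadraticDefect (hyersLimit f a c) x = 0 := by
  have hlim z : Tendsto (fun j => hyersSeq f a c j z) atTop (𝓝 (hyersLimit f a c z)) := by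
    obtain ⟨M, hM⟩ := hψ z
    exact tendsto_hyersSeq hc hf fun j => hM ⟨j, rfl⟩
  refine tendsto_nhds_unique (tendsto_quadraticDefect hlim x) ?_
  obtain ⟨M, hM⟩ := hφ x
  have hbound j : ‖quadraticDefect (hyersSeq f a c j) x‖ ≤ (c ^ j)⁻¹ * M := by
    rw [quadraticDefect_hyersSeq, norm_smul, Real.norm_of_nonneg (by positivity)]
    exact mul_le_mul_of_nonneg_left ((hD _).trans (hM ⟨j, rfl⟩)) (by positivity)
  refine squeeze_zero_norm hbound ?_
  simpa using (tendsto_inv_atTop_zero.comp (tendsto_pow_atTop_atTop_of_one_lt hc)).mul_const M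

end Hyers

section Ray

variable {G Y : Type*} [AddCommGroup G] [AddCommGroup Y] [TopologicalSpace Y] {h : G → Y}

theorem tendsto_apply_nsmul_sub_self {z : G} (hh : Tendsto (fun k : ℕ => h (k • z)) atTop (𝓝 0)) :
    Tendsto (fun n : ℕ => h (n • z - z)) atTop (𝓝 0) := by
  refine (hh.comp (tendsto_sub_atTop_nat 1)).congr' ?_
  filter_upwards [eventually_ge_atTop 1] with n hn
  obtain ⟨k, rfl⟩ := Nat.exists_eq_add_of_le' hn
  simp [succ_nsmul]

theorem sum_ite_eq_nsmul {m : ℕ} (i₀ : Fin m) (x : G) (n : ℕ) :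
    ∑ i, (if i = i₀ then x else n • x) = ((m - 1) * n + 1) • x := by
  rw [Fintype.sum_eq_add_sum_compl i₀, if_pos rfl,
    sum_congr rfl fun i hi => if_neg (mem_compl.1 hi |>.imp (mem_singleton.2 ·)), sum_const,
    card_compl, card_singleton, Fintype.card_fin, smul_smul, add_nsmul, one_nsmul, add_comm]

theorem tendsto_quadraticDefect_ite [IsTopologicalAddGroup Y] {m : ℕ} (hm : 2 ≤ m)
    (hh : ∀ z, Tendsto (fun k : ℕ => h (k • z)) atTop (𝓝 0)) (i₀ : Fin m) (x : G) :
    Tendsto (fun n : ℕ => quadraticDefect h (fun i => if i = i₀ then x else n • x)) atTop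
      (𝓝 (-(m • h x))) := by
  set t : ℕ → Fin m → G := fun n i => if i = i₀ then x else n • x
  have hsum : Tendsto (fun n => h (∑ i, t n i)) atTop (𝓝 0) := by
    simp only [t, sum_ite_eq_nsmul]
    refine (hh x).comp (tendsto_atTop_mono (fun n => ?_) tendsto_id)
    have : 1 ≤ m - 1 := by omega
    show n ≤ (m - 1) * n + 1
    nlinarith
  have hpair : ∀ i j, i ≠ j → Tendsto (fun n => h (t n i - t n j)) atTop (𝓝 0) := by
    intro i j hij
    by_cases hi : i = i₀
    · have hj : j ≠ i₀ := hi ▸ hij.symm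
      refine (tendsto_apply_nsmul_sub_self (hh (-x))).congr fun n => ?_
      simp only [t, if_pos hi, if_neg hj, smul_neg, sub_neg_eq_add, neg_add_eq_sub]
    by_cases hj : j = i₀
    · refine (tendsto_apply_nsmul_sub_self (hh x)).congr fun n => ?_
      simp only [t, if_neg hi, if_pos hj]
    · refine (hh 0).congr fun n => ?_
      simp only [t, if_neg hi, if_neg hj, sub_self, smul_zero]
  have hdiag : Tendsto (fun n => ∑ i, h (t n i)) atTop (𝓝 (h x)) := by
    have hterm i : Tendsto (fun n => h (t n i)) atTop (𝓝 (if i = i₀ then h x else 0)) := by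
      by_cases hi : i = i₀
      · simp only [t, if_pos hi]
        exact tendsto_const_nhds
      · simp only [t, if_neg hi]
        exact hh x
    simpa using tendsto_finsetSum univ fun i _ => hterm i
  have hpairs := tendsto_finsetSum (univ.filter fun q : Fin m × Fin m => q.1 < q.2)
    fun q hq => hpair _ _ (mem_filter.1 hq).2.ne
  have := (hsum.add hpairs).sub (hdiag.nsmul m)
  rwa [sum_const_zero, zero_add, zero_sub] at this

end Ray

theorem quadraticDefect_eq_zero_of_norm_le {G Y : Type*} [AddCommGroup G] [NormedAddCommGroup Y]
    [NormedSpace ℝ Y] [CompleteSpace Y] {m : ℕ} (hm : 2 ≤ m) (i₀ : Fin m)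
    {φ : (Fin m → G) → ℝ}
    (hφ₁ : ∀ x, Tendsto (fun n : ℕ => φ (fun i => if i = i₀ then x else n • x)) atTop (𝓝 0))
    (hφ₂ : ∀ x, Tendsto (fun n : ℕ => φ (n • x)) atTop (𝓝 0))
    {f : G → Y} (hf : ∀ x, ‖quadraticDefect f x‖ ≤ φ x) (x : Fin m → G) :
    quadraticDefect f x = 0 := by
  have : IsAddTorsionFree Y := .of_isTorsionFree ℝ Y
  have hφ₀ : φ 0 = 0 := by simpa using hφ₂ 0
  have hf₀ : f 0 = 0 := apply_zero_eq_zero_of_quadraticDefect hm (norm_le_zero_iff.1 (hφ₀ ▸ hf 0))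
  have hc : (1 : ℝ) < m ^ 2 := by
    have : (2 : ℝ) ≤ m := by exact_mod_cast hm
    nlinarith
  have hdiag z : ‖f (m • z) - ((m : ℝ) ^ 2) • f z‖ ≤ φ (fun _ => z) := by
    simpa [quadraticDefect_const hf₀, ← Nat.cast_smul_eq_nsmul ℝ, sq] using hf fun _ => z
  have hray z : Tendsto (fun k : ℕ => φ (fun _ => k • z)) atTop (𝓝 0) := hφ₂ fun _ => z
  set Q := hyersLimit f m ((m : ℝ) ^ 2)
  have hQ : ∀ x, quadraticDefect Q x = 0 :=
    quadraticDefect_hyersLimit_eq_zero hc hdiag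
      (fun z => (hray z).bddAbove_range.mono
        (Set.range_comp_subset_range (m ^ ·) fun k : ℕ => φ fun _ => k • z))
      (fun x => (hφ₂ x).bddAbove_range.mono
        (Set.range_comp_subset_range (m ^ ·) fun n : ℕ => φ (n • x))) hf
  have hfQ z : f z = Q z := by
    have hlim := tendsto_quadraticDefect_ite (h := f - Q) hm
      (fun z => tendsto_sub_hyersLimit (by omega) hc hdiag (hray z)) i₀ z
    have hzero : Tendsto (fun n : ℕ => quadraticDefect (f - Q)
        (fun i => if i = i₀ then z else n • z)) atTop (𝓝 0) := by
      simp only [quadraticDefect_sub, hQ, sub_zero]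
      exact squeeze_zero_norm (fun n => hf _) (hφ₁ z)
    have := tendsto_nhds_unique hlim hzero
    rwa [neg_eq_zero, nsmul_eq_zero_iff_right (by omega), Pi.sub_apply, sub_eq_zero] at this
  rw [funext hfQ]
  exact hQ x

theorem mdim_quadratic_hyperstability_banach
    {X : Type*} [AddCommGroup X]
    {Y : Type*} [NormedAddCommGroup Y] [NormedSpace ℝ Y] [CompleteSpace Y]
    (E : Set X) (hEne : E.Nonempty)
    (hEsub : ∀ x ∈ E, ∀ y ∈ E, x - y ∈ E)
    (m : ℕ) (hm : 2 ≤ m)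
    (φ : (Fin m → X) → ℝ)
    (hφ1 : ∀ x ∈ E,
      Tendsto (fun n : ℕ => φ (fun i => if i = ⟨0, by omega⟩ then x else n • x))
        atTop (𝓝 0))
    (hφ2 : ∀ x : Fin m → X, (∀ i, x i ∈ E) →
      Tendsto (fun n : ℕ => φ (fun i => n • x i)) atTop (𝓝 0))
    (f : X → Y)
    (hf : ∀ x : Fin m → X, (∀ i, x i ∈ E) →
      ‖f (∑ i, x i)
          + ∑ q ∈ Finset.univ.filter (fun q : Fin m × Fin m => q.1 < q.2),
              f (x q.1 - x q.2)
          - m • ∑ i, f (x i)‖ ≤ φ x) :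
    ∀ x : Fin m → X, (∀ i, x i ∈ E) →
      f (∑ i, x i)
        + ∑ q ∈ Finset.univ.filter (fun q : Fin m × Fin m => q.1 < q.2),
            f (x q.1 - x q.2)
        = m • ∑ i, f (x i) := by
  let H := AddSubgroup.ofSub E hEne fun x hx y hy => sub_eq_add_neg x y ▸ hEsub x hx y hy
  have key := quadraticDefect_eq_zero_of_norm_le (G := H) hm ⟨0, by omega⟩
    (φ := fun x => φ (H.subtype ∘ x)) (f := f ∘ H.subtype)
    (fun x => by simpa [Function.comp_def, apply_ite] using hφ1 x x.2)
    (fun x => hφ2 _ fun i => (x i).2)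
    (fun x => (quadraticDefect_comp f H.subtype x).symm ▸ hf _ fun i => (x i).2)
  intro x hx
  have := key fun i => ⟨x i, hx i⟩
  rw [quadraticDefect_comp] at this
  exact sub_eq_zero.1 this
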